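/- arXiv:1703.03338 — 8 statements merged into one kernel-verified Lean document; each statement's English description precedes it below -/
import Mathlib

section
/- Fix a positive integer ν, a nonzero vector h ∈ ℂ^ν, a nonzero complex number g, and real numbers P > 0 and σ² > 0; set ρ = σ²/P, a = ‖h‖² and b = |g|², and let ω = ((a + b + ρ) − √((a + b + ρ)² − 4ab)) / (2b). Define the precoding vectors m₁* = (√(a − ω²b)/a)·h and m₂* = (−ω g / a)·h. Then ‖m₁*‖² + ‖m₂*‖² ≤ 1, and for every pair of vectors m₁, m₂ ∈ ℂ^ν satisfying ‖m₁‖² + ‖m₂‖² ≤ 1 one has Γ(m₁, m₂) ≤ Γ(m₁*, m₂*), i.e. the stated precoder maximizes the SINR subject to the unit total-power constraint. -/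
/-!
The SINR depends on `m₁, m₂` only through `u = |⟨h, m₁⟩|` and `w = |⟨h, m₂⟩ + g|`, and
Cauchy–Schwarz with the power constraint gives `u² + v² ≤ ‖h‖²` for `v = |⟨h, m₂⟩| ≥ |g| - w`.
This reduces the problem to maximizing `(a - t²) / ((|g| - t)² + ρ)` over `0 ≤ t ≤ |g|`.
Since `ω` is the smaller root of `b ω² - (a + b + ρ) ω + a`, the difference
`(a - ω² b)((|g| - t)² + ρ) - (a - t²)((1 - ω)² b + ρ)` equals `√D · (t - ω |g|)²`, where `D` is the
discriminant, so the maximum is attained at `t = ω |g|`, which is what `(m₁*, m₂*)` achieves.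
-/

noncomputable def cancellationFactor (a b ρ : ℝ) : ℝ :=
  ((a + b + ρ) - √((a + b + ρ) ^ 2 - 4 * a * b)) / (2 * b)

section CancellationFactor

variable {a b ρ : ℝ}

lemma sqrt_discr_eq_sub_cancellationFactor (hb : b ≠ 0) :
    √((a + b + ρ) ^ 2 - 4 * a * b) = a + b + ρ - 2 * b * cancellationFactor a b ρ := by
  unfold cancellationFactor
  field_simp
  ring

lemma cancellationFactor_quadratic (ha : 0 ≤ a) (hb : 0 < b) (hρ : 0 ≤ ρ) :
    b * cancellationFactor a b ρ ^ 2 - (a + b + ρ) * cancellationFactor a b ρ + a = 0 := by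
  have hD : 0 ≤ (a + b + ρ) ^ 2 - 4 * a * b := by nlinarith [sq_nonneg (a - b)]
  have h := Real.sq_sqrt hD
  rw [sqrt_discr_eq_sub_cancellationFactor hb.ne'] at h
  have h4b : 4 * b * (b * cancellationFactor a b ρ ^ 2 - (a + b + ρ) * cancellationFactor a b ρ
      + a) = 0 := by
    linear_combination h
  exact (mul_eq_zero.mp h4b).resolve_left (by positivity)

lemma cancellationFactor_nonneg (ha : 0 ≤ a) (hb : 0 < b) (hρ : 0 ≤ ρ) :
    0 ≤ cancellationFactor a b ρ := by
  have hS : √((a + b + ρ) ^ 2 - 4 * a * b) ≤ a + b + ρ :=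
    Real.sqrt_le_iff.mpr ⟨by positivity, by nlinarith⟩
  unfold cancellationFactor
  exact div_nonneg (by linarith) (by positivity)

lemma sub_cancellationFactor_sq_mul_nonneg (ha : 0 ≤ a) (hb : 0 < b) (hρ : 0 ≤ ρ) :
    0 ≤ a - cancellationFactor a b ρ ^ 2 * b := by
  have hq := cancellationFactor_quadratic ha hb hρ
  have hD := sqrt_discr_eq_sub_cancellationFactor (a := a) (ρ := ρ) hb.ne'
  have h : a - cancellationFactor a b ρ ^ 2 * b =
      cancellationFactor a b ρ * √((a + b + ρ) ^ 2 - 4 * a * b) := by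
    rw [hD]
    linear_combination hq
  rw [h]
  exact mul_nonneg (cancellationFactor_nonneg ha hb hρ) (Real.sqrt_nonneg _)

variable {γ : ℝ}

lemma sub_sq_mul_le_cancellationFactor (hγ : γ ≠ 0) (ha : 0 ≤ a) (hρ : 0 ≤ ρ) (t : ℝ) :
    (a - t ^ 2) * ((1 - cancellationFactor a (γ ^ 2) ρ) ^ 2 * γ ^ 2 + ρ) ≤
      (a - cancellationFactor a (γ ^ 2) ρ ^ 2 * γ ^ 2) * ((γ - t) ^ 2 + ρ) := by
  set ω := cancellationFactor a (γ ^ 2) ρ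
  have hb : 0 < γ ^ 2 := by positivity
  have hq := cancellationFactor_quadratic ha hb hρ
  have hgap : (a - ω ^ 2 * γ ^ 2) * ((γ - t) ^ 2 + ρ)
      - (a - t ^ 2) * ((1 - ω) ^ 2 * γ ^ 2 + ρ)
      = √((a + γ ^ 2 + ρ) ^ 2 - 4 * a * γ ^ 2) * (t - ω * γ) ^ 2 := by
    rw [sqrt_discr_eq_sub_cancellationFactor hb.ne']
    linear_combination (2 * γ ^ 2 * ω - 2 * γ * t) * hq
  nlinarith [mul_nonneg (Real.sqrt_nonneg ((a + γ ^ 2 + ρ) ^ 2 - 4 * a * γ ^ 2))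
    (sq_nonneg (t - ω * γ))]

/-- The scalar relaxation of the SINR maximization: `u`, `v`, `w` stand for
`|⟨h, m₁⟩|`, `|⟨h, m₂⟩|` and `|⟨h, m₂⟩ + g|`, and `γ = |g|`. -/
lemma sq_div_le_cancellationFactor (hγ : 0 < γ) (ha : 0 ≤ a) (hρ : 0 < ρ) {u v w : ℝ}
    (huv : u ^ 2 + v ^ 2 ≤ a) (hγw : γ ≤ w + v) :
    u ^ 2 / (w ^ 2 + ρ) ≤
      (a - cancellationFactor a (γ ^ 2) ρ ^ 2 * γ ^ 2) /
        ((1 - cancellationFactor a (γ ^ 2) ρ) ^ 2 * γ ^ 2 + ρ) := by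
  set ω := cancellationFactor a (γ ^ 2) ρ
  obtain ⟨s, hus, hsw⟩ : ∃ s, u ^ 2 ≤ a - s ^ 2 ∧ (γ - s) ^ 2 ≤ w ^ 2 := by
    rcases le_total v γ with hvγ | hγv
    · exact ⟨v, by linarith, pow_le_pow_left₀ (by linarith) (by linarith) 2⟩
    · exact ⟨γ, by nlinarith, by simpa using sq_nonneg w⟩
  have hX : 0 ≤ a - ω ^ 2 * γ ^ 2 := sub_cancellationFactor_sq_mul_nonneg ha (by positivity) hρ.le
  rw [div_le_div_iff₀ (by positivity) (by positivity)]
  calc u ^ 2 * ((1 - ω) ^ 2 * γ ^ 2 + ρ)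
      ≤ (a - s ^ 2) * ((1 - ω) ^ 2 * γ ^ 2 + ρ) := by gcongr
    _ ≤ (a - ω ^ 2 * γ ^ 2) * ((γ - s) ^ 2 + ρ) :=
      sub_sq_mul_le_cancellationFactor hγ.ne' ha hρ.le s
    _ ≤ (a - ω ^ 2 * γ ^ 2) * (w ^ 2 + ρ) := by gcongr

end CancellationFactor

lemma mul_div_mul_add_eq_div_add_div {x y P : ℝ} (hP : P ≠ 0) (σ : ℝ) :
    x * P / (y * P + σ) = x / (y + σ / P) := by
  rw [← mul_div_mul_right x (y + σ / P) hP, add_mul, div_mul_cancel₀ _ hP]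

section InnerProduct

variable {E : Type*} [NormedAddCommGroup E] [InnerProductSpace ℂ E]

lemma inner_smul_self_right (h : E) (c : ℂ) : inner ℂ h (c • h) = c * ((‖h‖ ^ 2 : ℝ) : ℂ) := by
  rw [inner_smul_right, inner_self_eq_norm_sq_to_K, Complex.ofReal_pow]
  rfl

lemma norm_inner_ofReal_smul_self (h : E) (r : ℝ) : ‖inner ℂ h ((r : ℂ) • h)‖ = |r| * ‖h‖ ^ 2 := by
  rw [inner_smul_self_right, norm_mul, Complex.norm_real, Complex.norm_real, Real.norm_eq_abs,
    norm_pow, norm_norm]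

lemma inner_smul_self_right_add {h : E} (hh : h ≠ 0) (ω : ℝ) (g : ℂ) :
    inner ℂ h ((-(ω : ℂ) * g / ((‖h‖ ^ 2 : ℝ) : ℂ)) • h) + g = ((1 - ω : ℝ) : ℂ) * g := by
  have : ((‖h‖ ^ 2 : ℝ) : ℂ) ≠ 0 := by exact_mod_cast (pow_pos (norm_pos_iff.mpr hh) 2).ne'
  rw [inner_smul_self_right, div_mul_cancel₀ _ this]
  push_cast
  ring

lemma sq_norm_inner_add_sq_norm_inner_le (h x y : E) :
    ‖inner ℂ h x‖ ^ 2 + ‖inner ℂ h y‖ ^ 2 ≤ ‖h‖ ^ 2 * (‖x‖ ^ 2 + ‖y‖ ^ 2) := by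
  have hx := pow_le_pow_left₀ (norm_nonneg _) (norm_inner_le_norm (𝕜 := ℂ) h x) 2
  have hy := pow_le_pow_left₀ (norm_nonneg _) (norm_inner_le_norm (𝕜 := ℂ) h y) 2
  rw [mul_pow] at hx hy
  linarith

end InnerProduct

theorem stmt0_general (ν : ℕ) (h : EuclideanSpace ℂ (Fin ν)) (hh : h ≠ 0)
    (g : ℂ) (hg : g ≠ 0) (P σ2 : ℝ) (hP : 0 < P) (hσ : 0 < σ2) :
    let ρ : ℝ := σ2 / P
    let a : ℝ := ‖h‖ ^ 2
    let b : ℝ := ‖g‖ ^ 2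
    let ω : ℝ := ((a + b + ρ) - Real.sqrt ((a + b + ρ) ^ 2 - 4 * a * b)) / (2 * b)
    let Γ : EuclideanSpace ℂ (Fin ν) → EuclideanSpace ℂ (Fin ν) → ℝ := fun m₁ m₂ =>
      ‖(inner ℂ h m₁ : ℂ)‖ ^ 2 * P /
        (‖(inner ℂ h m₂ : ℂ) + g‖ ^ 2 * P + σ2)
    let m₁s : EuclideanSpace ℂ (Fin ν) :=
      ((Real.sqrt (a - ω ^ 2 * b) / a : ℝ) : ℂ) • h
    let m₂s : EuclideanSpace ℂ (Fin ν) := (-(ω : ℂ) * g / (a : ℂ)) • h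
    ‖m₁s‖ ^ 2 + ‖m₂s‖ ^ 2 ≤ 1 ∧
      ∀ m₁ m₂ : EuclideanSpace ℂ (Fin ν),
        ‖m₁‖ ^ 2 + ‖m₂‖ ^ 2 ≤ 1 → Γ m₁ m₂ ≤ Γ m₁s m₂s := by
  intro ρ a b ω Γ m₁s m₂s
  have hρ : 0 < ρ := div_pos hσ hP
  have ha : 0 < a := pow_pos (norm_pos_iff.mpr hh) 2
  have hγ : 0 < ‖g‖ := norm_pos_iff.mpr hg
  have hX : 0 ≤ a - ω ^ 2 * b := sub_cancellationFactor_sq_mul_nonneg ha.le (by positivity) hρ.le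
  have hΓ (m₁ m₂) : Γ m₁ m₂ = ‖(inner ℂ h m₁ : ℂ)‖ ^ 2 / (‖(inner ℂ h m₂ : ℂ) + g‖ ^ 2 + ρ) :=
    mul_div_mul_add_eq_div_add_div hP.ne' σ2
  have hm₁s : m₁s = ((√(a - ω ^ 2 * b) / a : ℝ) : ℂ) • h := rfl
  have hm₂s : m₂s = (-(ω : ℂ) * g / (a : ℂ)) • h := rfl
  have hω : ω = cancellationFactor a b ρ := rfl
  clear_value Γ m₁s m₂s ω
  subst hm₁s hm₂s
  refine ⟨?_, fun m₁ m₂ hm => ?_⟩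
  · simp only [norm_smul, mul_pow, norm_div, norm_mul, norm_neg, Complex.norm_real,
      Real.norm_eq_abs, div_pow, sq_abs, Real.sq_sqrt hX]
    field_simp
    linarith
  · rw [hΓ, hΓ, norm_inner_ofReal_smul_self, inner_smul_self_right_add hh, norm_mul,
      Complex.norm_real, Real.norm_eq_abs, mul_pow, sq_abs, mul_pow, sq_abs,
      div_pow, Real.sq_sqrt hX, div_mul_cancel₀ _ (pow_ne_zero 2 ha.ne'), hω]
    refine sq_div_le_cancellationFactor (v := ‖(inner ℂ h m₂ : ℂ)‖) hγ ha.le hρ ?_ ?_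
    · calc _ ≤ ‖h‖ ^ 2 * (‖m₁‖ ^ 2 + ‖m₂‖ ^ 2) := sq_norm_inner_add_sq_norm_inner_le h m₁ m₂
        _ ≤ a := mul_le_of_le_one_right (by positivity) hm
    · simpa using norm_sub_le ((inner ℂ h m₂ : ℂ) + g) (inner ℂ h m₂)

/-- The precoder `(m₁*, m₂*)` built from
`ω = ((a+b+ρ) − √((a+b+ρ)² − 4ab))/(2b)` satisfies the unit total-power
constraint and maximizes the SINR
`Γ(m₁, m₂) = |⟨h, m₁⟩|² P / (|⟨h, m₂⟩ + g|² P + σ²)` among all precoders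
satisfying `‖m₁‖² + ‖m₂‖² ≤ 1`. -/
theorem stmt0 (ν : ℕ) (hν : 0 < ν) (h : EuclideanSpace ℂ (Fin ν)) (hh : h ≠ 0)
    (g : ℂ) (hg : g ≠ 0) (P σ2 : ℝ) (hP : 0 < P) (hσ : 0 < σ2) :
    let ρ : ℝ := σ2 / P
    let a : ℝ := ‖h‖ ^ 2
    let b : ℝ := ‖g‖ ^ 2
    let ω : ℝ := ((a + b + ρ) - Real.sqrt ((a + b + ρ) ^ 2 - 4 * a * b)) / (2 * b)
    let Γ : EuclideanSpace ℂ (Fin ν) → EuclideanSpace ℂ (Fin ν) → ℝ := fun m₁ m₂ =>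
      ‖(inner ℂ h m₁ : ℂ)‖ ^ 2 * P /
        (‖(inner ℂ h m₂ : ℂ) + g‖ ^ 2 * P + σ2)
    let m₁s : EuclideanSpace ℂ (Fin ν) :=
      ((Real.sqrt (a - ω ^ 2 * b) / a : ℝ) : ℂ) • h
    let m₂s : EuclideanSpace ℂ (Fin ν) := (-(ω : ℂ) * g / (a : ℂ)) • h
    ‖m₁s‖ ^ 2 + ‖m₂s‖ ^ 2 ≤ 1 ∧
      ∀ m₁ m₂ : EuclideanSpace ℂ (Fin ν),
        ‖m₁‖ ^ 2 + ‖m₂‖ ^ 2 ≤ 1 → Γ m₁ m₂ ≤ Γ m₁s m₂s :=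
  stmt0_general ν h hh g hg P σ2 hP hσ
end

section
/- Fix a positive integer ν, a nonzero vector h ∈ ℂ^ν, a nonzero complex number g, and real numbers P > 0 and σ² > 0; set a = ‖h‖² and b = |g|². Let ω be any real number with 0 < ω ≤ min{1, √(a/b)}, and define m₁ = (√(a − ω²b)/a)·h and m₂ = (−ω g / a)·h. Then: (i) ‖m₁‖² + ‖m₂‖² = 1; (ii) |⟨h, m₁⟩|² = a − ω²b; (iii) |⟨h, m₂⟩ + g|² = (1 − ω)² b; consequently the achieved SINR equals Γ(m₁, m₂) = (a − ω²b) P / ((1 − ω)² b P + σ²). -/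
/-!
Both precoders are multiples of `h`, so every quantity reduces to scalars via `⟪h, c • h⟫ = c ‖h‖²`
and `‖c • h‖ = ‖c‖ ‖h‖`. The constraint `ω ≤ √(a/b)` is exactly what makes `a − ω²b ≥ 0`, so that
`√(a − ω²b)² = a − ω²b`; the powers of `m₁` and `m₂` are then `(a − ω²b)/a` and `ω²b/a`, and
`⟪h, m₂⟫ = −ωg` cancels a fraction `ω` of the inter-relay interference `g`.
-/

open scoped InnerProductSpace

lemma sq_mul_le_of_le_sqrt_div {ω a b : ℝ} (hω : 0 ≤ ω) (ha : 0 ≤ a) (hb : 0 ≤ b)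
    (h : ω ≤ √(a / b)) : ω ^ 2 * b ≤ a := by
  have hsq : ω ^ 2 ≤ a / b := (Real.le_sqrt hω (by positivity)).mp h
  rcases hb.eq_or_lt with rfl | hb
  · simpa using ha
  · exact (le_div_iff₀ hb).mp hsq

lemma inner_smul_right_self {𝕜 E : Type*} [RCLike 𝕜] [NormedAddCommGroup E]
    [InnerProductSpace 𝕜 E] (x : E) (c : 𝕜) : ⟪x, c • x⟫_𝕜 = c * (‖x‖ ^ 2 : ℝ) := by
  rw [inner_smul_right, inner_self_eq_norm_sq_to_K]
  norm_cast

theorem stmt1_general (ν : ℕ) (h : EuclideanSpace ℂ (Fin ν)) (hh : h ≠ 0)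
    (g : ℂ) (P σ2 : ℝ) (ω : ℝ)
    (hω0 : 0 < ω)
    (hω1 : ω ≤ min 1 (Real.sqrt (‖h‖ ^ 2 / ‖g‖ ^ 2))) :
    let a : ℝ := ‖h‖ ^ 2
    let b : ℝ := ‖g‖ ^ 2
    let m₁ : EuclideanSpace ℂ (Fin ν) :=
      ((Real.sqrt (a - ω ^ 2 * b) / a : ℝ) : ℂ) • h
    let m₂ : EuclideanSpace ℂ (Fin ν) := (-(ω : ℂ) * g / (a : ℂ)) • h
    ‖m₁‖ ^ 2 + ‖m₂‖ ^ 2 = 1 ∧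
      ‖(inner ℂ h m₁ : ℂ)‖ ^ 2 = a - ω ^ 2 * b ∧
      ‖(inner ℂ h m₂ : ℂ) + g‖ ^ 2 = (1 - ω) ^ 2 * b ∧
      ‖(inner ℂ h m₁ : ℂ)‖ ^ 2 * P /
          (‖(inner ℂ h m₂ : ℂ) + g‖ ^ 2 * P + σ2) =
        (a - ω ^ 2 * b) * P / ((1 - ω) ^ 2 * b * P + σ2) := by
  intro a b m₁ m₂
  have ha : 0 < a := by positivity
  have hωb : ω ^ 2 * b ≤ a :=
    sq_mul_le_of_le_sqrt_div hω0.le ha.le (by positivity) (hω1.trans (min_le_right _ _))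
  have hsqrt : √(a - ω ^ 2 * b) ^ 2 = a - ω ^ 2 * b := Real.sq_sqrt (by linarith)
  have hm₁ : ⟪h, m₁⟫_ℂ = (√(a - ω ^ 2 * b) : ℂ) := by
    rw [inner_smul_right_self]
    change ((√(a - ω ^ 2 * b) / a : ℝ) : ℂ) * (a : ℂ) = _
    rw [← Complex.ofReal_mul, div_mul_cancel₀ _ ha.ne']
  have hm₂ : ⟪h, m₂⟫_ℂ + g = ((1 - ω : ℝ) : ℂ) * g := by
    have haC : (a : ℂ) ≠ 0 := by exact_mod_cast ha.ne'
    rw [inner_smul_right_self]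
    change -(ω : ℂ) * g / a * a + g = _
    rw [div_mul_cancel₀ _ haC]
    push_cast
    ring
  have hsignal : ‖⟪h, m₁⟫_ℂ‖ ^ 2 = a - ω ^ 2 * b := by
    rw [hm₁, Complex.norm_real, Real.norm_eq_abs, sq_abs, hsqrt]
  have hinterference : ‖⟪h, m₂⟫_ℂ + g‖ ^ 2 = (1 - ω) ^ 2 * b := by
    rw [hm₂, norm_mul, mul_pow, Complex.norm_real, Real.norm_eq_abs, sq_abs]
  have hpower : ‖m₁‖ ^ 2 + ‖m₂‖ ^ 2 = 1 := by
    simp only [m₁, m₂, norm_smul, mul_pow, norm_div, norm_mul, norm_neg, Complex.norm_real,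
      Real.norm_eq_abs, sq_abs, div_pow, hsqrt, abs_of_pos hω0, abs_of_pos ha]
    field_simp
    ring
  exact ⟨hpower, hsignal, hinterference, by rw [hsignal, hinterference]⟩

/-- For any feasible `ω` with `0 < ω ≤ min{1, √(a/b)}`, the precoder
`m₁ = (√(a − ω²b)/a)·h`, `m₂ = (−ω g / a)·h` uses exactly unit total power,
achieves desired-signal power `|⟨h, m₁⟩|² = a − ω²b`, residual interference power
`|⟨h, m₂⟩ + g|² = (1 − ω)² b`, and hence SINR `(a − ω²b)P/((1 − ω)²bP + σ²)`. -/
theorem stmt1 (ν : ℕ) (hν : 0 < ν) (h : EuclideanSpace ℂ (Fin ν)) (hh : h ≠ 0)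
    (g : ℂ) (hg : g ≠ 0) (P σ2 : ℝ) (hP : 0 < P) (hσ : 0 < σ2) (ω : ℝ)
    (hω0 : 0 < ω)
    (hω1 : ω ≤ min 1 (Real.sqrt (‖h‖ ^ 2 / ‖g‖ ^ 2))) :
    let a : ℝ := ‖h‖ ^ 2
    let b : ℝ := ‖g‖ ^ 2
    let m₁ : EuclideanSpace ℂ (Fin ν) :=
      ((Real.sqrt (a - ω ^ 2 * b) / a : ℝ) : ℂ) • h
    let m₂ : EuclideanSpace ℂ (Fin ν) := (-(ω : ℂ) * g / (a : ℂ)) • h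
    ‖m₁‖ ^ 2 + ‖m₂‖ ^ 2 = 1 ∧
      ‖(inner ℂ h m₁ : ℂ)‖ ^ 2 = a - ω ^ 2 * b ∧
      ‖(inner ℂ h m₂ : ℂ) + g‖ ^ 2 = (1 - ω) ^ 2 * b ∧
      ‖(inner ℂ h m₁ : ℂ)‖ ^ 2 * P /
          (‖(inner ℂ h m₂ : ℂ) + g‖ ^ 2 * P + σ2) =
        (a - ω ^ 2 * b) * P / ((1 - ω) ^ 2 * b * P + σ2) :=
  stmt1_general ν h hh g P σ2 ω hω0 hω1
end

section
/- Let a, b, ρ > 0 be real numbers and define f(ω) = (a − bω²)/(b(1 − ω)² + ρ) and ω₁ = ((a + b + ρ) − √((a + b + ρ)² − 4ab)) / (2b). Then for every real ω with 0 < ω ≤ min{1, √(a/b)} one has f(ω) ≤ f(ω₁); that is, ω₁ maximizes f over the feasible interval (0, min{1, √(a/b)}]. -/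
/-
Write `g ω = a - b ω²`, `D ω = b (1 - ω)² + ρ` and `s = √((a + b + ρ)² - 4ab)`. Because `ω₁` is a
root of `b ω² - (a + b + ρ) ω + a` and `s = a + b + ρ - 2bω₁` is the gap to the other root
(times `b`), one has the identity `g ω₁ · D ω - g ω · D ω₁ = b s (ω - ω₁)²`. As `D > 0`, `b > 0`
and `s ≥ 0`, `ω₁` is a global maximizer of `g / D` on `ℝ`.
-/

theorem cross_sub_eq_mul_sq_of_isRoot {R : Type*} [CommRing R] {a b ρ s ω₁ : R}
    (hroot : b * (ω₁ * ω₁) + -(a + b + ρ) * ω₁ + a = 0) (hs : s = a + b + ρ - 2 * b * ω₁)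
    (ω : R) :
    (a - b * ω₁ ^ 2) * (b * (1 - ω) ^ 2 + ρ) - (a - b * ω ^ 2) * (b * (1 - ω₁) ^ 2 + ρ) =
      b * s * (ω - ω₁) ^ 2 := by
  subst hs
  linear_combination 2 * b * (ω₁ - ω) * hroot

theorem stmt2_general (a b ρ : ℝ) (hb : 0 < b) (hρ : 0 < ρ) :
    let f : ℝ → ℝ := fun ω => (a - b * ω ^ 2) / (b * (1 - ω) ^ 2 + ρ)
    let ω₁ : ℝ := ((a + b + ρ) - Real.sqrt ((a + b + ρ) ^ 2 - 4 * a * b)) / (2 * b)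
    ∀ ω : ℝ, 0 < ω → ω ≤ min 1 (Real.sqrt (a / b)) → f ω ≤ f ω₁ := by
  intro f ω₁ ω _ _
  set s := Real.sqrt ((a + b + ρ) ^ 2 - 4 * a * b)
  have hdisc : discrim b (-(a + b + ρ)) a = s * s := by
    rw [Real.mul_self_sqrt (by linarith [sq_nonneg (a - b + ρ), mul_pos hb hρ]), discrim]
    ring
  have hroot : b * (ω₁ * ω₁) + -(a + b + ρ) * ω₁ + a = 0 :=
    (quadratic_eq_zero_iff hb.ne' hdisc ω₁).mpr (.inr (by rw [neg_neg]))
  have hs : s = a + b + ρ - 2 * b * ω₁ := by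
    rw [mul_div_cancel₀ _ (by positivity : 2 * b ≠ 0)]
    ring
  have hcross := cross_sub_eq_mul_sq_of_isRoot hroot hs ω
  show (a - b * ω ^ 2) / (b * (1 - ω) ^ 2 + ρ) ≤ (a - b * ω₁ ^ 2) / (b * (1 - ω₁) ^ 2 + ρ)
  rw [div_le_div_iff₀ (by positivity) (by positivity)]
  linarith [mul_nonneg (mul_nonneg hb.le (Real.sqrt_nonneg _ : 0 ≤ s)) (sq_nonneg (ω - ω₁))]

/-- `ω₁ = ((a+b+ρ) − √((a+b+ρ)² − 4ab))/(2b)` maximizes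
`f(ω) = (a − bω²)/(b(1 − ω)² + ρ)` over the interval `(0, min{1, √(a/b)}]`. -/
theorem stmt2 (a b ρ : ℝ) (ha : 0 < a) (hb : 0 < b) (hρ : 0 < ρ) :
    let f : ℝ → ℝ := fun ω => (a - b * ω ^ 2) / (b * (1 - ω) ^ 2 + ρ)
    let ω₁ : ℝ := ((a + b + ρ) - Real.sqrt ((a + b + ρ) ^ 2 - 4 * a * b)) / (2 * b)
    ∀ ω : ℝ, 0 < ω → ω ≤ min 1 (Real.sqrt (a / b)) → f ω ≤ f ω₁ :=
  stmt2_general a b ρ hb hρ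
end

section
/- Let a, b, ρ > 0 be real numbers and define ω₁ = ((a + b + ρ) − √((a + b + ρ)² − 4ab)) / (2b). Then ω₁ > 0; moreover, if a ≥ b then ω₁ < 1, and if a < b then ω₁ < √(a/b). In particular ω₁ always lies in the feasible interval (0, min{1, √(a/b)}]. -/
open Real

/-! Both claimed bounds `t` (namely `1` and `√(a/b)`) make the quadratic `bω² − (a+b+ρ)ω + a`
negative, so they lie strictly between its two roots and in particular exceed the smaller one. -/

section QuadraticSmallerRoot

variable {a b c t : ℝ}

theorem smallerRoot_pos (ha : 0 < a) (hb : 0 < b) (hc : 0 < c) :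
    0 < (b - √(b ^ 2 - 4 * a * c)) / (2 * a) := by
  have hac : 0 < 4 * a * c := by positivity
  exact div_pos (sub_pos.2 ((sqrt_lt' hb).2 (by linarith))) (by positivity)

theorem smallerRoot_lt_of_eval_neg (ha : 0 < a) (h : a * t ^ 2 - b * t + c < 0) :
    (b - √(b ^ 2 - 4 * a * c)) / (2 * a) < t := by
  have hsq : (2 * a * t - b) ^ 2 < b ^ 2 - 4 * a * c := by nlinarith
  have habs : |2 * a * t - b| < √(b ^ 2 - 4 * a * c) := by
    rw [← sqrt_sq_eq_abs]
    exact sqrt_lt_sqrt (sq_nonneg _) hsq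
  rw [div_lt_iff₀ (by positivity)]
  linarith [neg_abs_le (2 * a * t - b)]

end QuadraticSmallerRoot

/-- The smaller root `ω₁` of `bω² − (a+b+ρ)ω + a = 0` is positive;
it is less than `1` when `a ≥ b` and less than `√(a/b)` when `a < b`, so it
lies in the feasible interval `(0, min{1, √(a/b)}]`. -/
theorem stmt3 (a b ρ : ℝ) (ha : 0 < a) (hb : 0 < b) (hρ : 0 < ρ) :
    let ω₁ : ℝ := ((a + b + ρ) - Real.sqrt ((a + b + ρ) ^ 2 - 4 * a * b)) / (2 * b)
    0 < ω₁ ∧ (a ≥ b → ω₁ < 1) ∧ (a < b → ω₁ < Real.sqrt (a / b)) := by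
  intro ω₁
  have hω : ω₁ = ((a + b + ρ) - √((a + b + ρ) ^ 2 - 4 * b * a)) / (2 * b) := by
    simp only [ω₁, mul_right_comm 4 a b]
  set r := √(a / b)
  have hr : 0 < r := sqrt_pos.2 (div_pos ha hb)
  have hbr : b * r ^ 2 = a := by rw [sq_sqrt (div_pos ha hb).le]; field_simp
  have eval_one : b * 1 ^ 2 - (a + b + ρ) * 1 + a < 0 := by linarith
  have eval_r : b * r ^ 2 - (a + b + ρ) * r + a < 0 := by
    have : b * r ^ 2 - (a + b + ρ) * r + a = -(r * (b * (r - 1) ^ 2 + ρ)) := by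
      linear_combination (r - 1) * hbr
    rw [this, neg_neg_iff_pos]
    positivity
  rw [hω]
  exact ⟨smallerRoot_pos hb (by positivity) ha,
    fun _ => smallerRoot_lt_of_eval_neg hb eval_one,
    fun _ => smallerRoot_lt_of_eval_neg hb eval_r⟩
end

section
/- Let a, b, σ², P_T, P_max > 0 be real numbers, and set c = √(P_T) and M = √(P_max). Define h(ω, x) = (a − bω²) x² / (b(c − ωx)² + σ²). Define ω₁ = (P_T b + σ²)/(√(P_T P_max) b) and ω₂ = [ (P_max a + P_T b + σ²) − √((P_max a + P_T b + σ²)² − 4 P_T P_max a b) ] / (2 √(P_T P_max) b), and let ω* = min{1, √(a/b), ω₁, ω₂}. Then for every ω with 0 < ω ≤ min{1, √(a/b)} and every x with 0 < x ≤ M one has h(ω, x) ≤ h(ω*, M); that is, the SINR is jointly maximized by transmitting at full source power P_S = P_max with interference-suppression parameter ω*. -/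
/-!
Moving the source amplitude from `x` to the full amplitude `M` while rescaling `ω` to `ωx/M`
keeps the interference term `ωx` and only increases the signal term, so it suffices to
maximize `v ↦ h(v, M)` over `0 < v ≤ min{1, √(a/b)}`. Cross-multiplying, `h(v, M) - h(w, M)`
has the sign of `(v - w)((v - r)(w - s) + (v - s)(w - r))`, where `r ≤ s` are the roots of
`bcM t² - (aM² + bc² + σ²) t + acM`; hence `v ↦ h(v, M)` increases up to `r = ω₂` and
decreases on `[r, s]`. Since `√(a/b) ≤ s` and `ω₂ ≤ ω₁`, the maximum sits at `ω*`.
-/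

open Real Set

noncomputable def sinr (a b σ2 c ω x : ℝ) : ℝ :=
  (a - b * ω ^ 2) * x ^ 2 / (b * (c - ω * x) ^ 2 + σ2)

section Sinr

variable {a b σ2 c M : ℝ}

lemma sinr_le_sinr_full_power (ha : 0 ≤ a) (hb : 0 ≤ b) (hσ : 0 ≤ σ2) (hM : 0 < M)
    {ω x : ℝ} (hx : 0 ≤ x) (hxM : x ≤ M) :
    sinr a b σ2 c ω x ≤ sinr a b σ2 c (ω * x / M) M := by
  have hvM : ω * x / M * M = ω * x := div_mul_cancel₀ _ hM.ne'
  have hnum : (a - b * (ω * x / M) ^ 2) * M ^ 2 = a * M ^ 2 - b * ω ^ 2 * x ^ 2 := by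
    field_simp
  have hx2 : a * x ^ 2 ≤ a * M ^ 2 := by gcongr
  unfold sinr
  rw [hvM, hnum]
  gcongr
  linarith

lemma sinr_cross_sub {r s v w : ℝ} (hsum : b * c * M * (r + s) = a * M ^ 2 + b * c ^ 2 + σ2)
    (hprod : b * (r * s) = a) :
    (a - b * v ^ 2) * M ^ 2 * (b * (c - w * M) ^ 2 + σ2) -
        (a - b * w ^ 2) * M ^ 2 * (b * (c - v * M) ^ 2 + σ2) =
      b ^ 2 * c * M ^ 3 * ((v - w) * ((v - r) * (w - s) + (v - s) * (w - r))) := by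
  obtain rfl : σ2 = b * c * M * (r + s) - a * M ^ 2 - b * c ^ 2 := by linarith
  subst hprod
  ring

lemma sinr_le_sinr_of_cross_nonneg (hb : 0 < b) (hσ : 0 < σ2) (hc : 0 < c) (hM : 0 < M)
    {r s v w : ℝ} (hsum : b * c * M * (r + s) = a * M ^ 2 + b * c ^ 2 + σ2)
    (hprod : b * (r * s) = a) (h : 0 ≤ (v - w) * ((v - r) * (w - s) + (v - s) * (w - r))) :
    sinr a b σ2 c w M ≤ sinr a b σ2 c v M := by
  unfold sinr
  rw [div_le_div_iff₀ (by positivity) (by positivity), ← sub_nonneg,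
    sinr_cross_sub hsum hprod]
  positivity

variable {r s : ℝ}

lemma monotoneOn_sinr_Iic (hb : 0 < b) (hσ : 0 < σ2) (hc : 0 < c) (hM : 0 < M)
    (hsum : b * c * M * (r + s) = a * M ^ 2 + b * c ^ 2 + σ2) (hprod : b * (r * s) = a)
    (hrs : r ≤ s) : MonotoneOn (fun v ↦ sinr a b σ2 c v M) (Iic r) := by
  intro w (hw : w ≤ r) v (hv : v ≤ r) hwv
  apply sinr_le_sinr_of_cross_nonneg hb hσ hc hM hsum hprod
  have h₁ : 0 ≤ (v - r) * (w - s) := mul_nonneg_of_nonpos_of_nonpos (by linarith) (by linarith)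
  have h₂ : 0 ≤ (v - s) * (w - r) := mul_nonneg_of_nonpos_of_nonpos (by linarith) (by linarith)
  exact mul_nonneg (by linarith) (by linarith)

lemma antitoneOn_sinr_Icc (hb : 0 < b) (hσ : 0 < σ2) (hc : 0 < c) (hM : 0 < M)
    (hsum : b * c * M * (r + s) = a * M ^ 2 + b * c ^ 2 + σ2) (hprod : b * (r * s) = a) :
    AntitoneOn (fun v ↦ sinr a b σ2 c v M) (Icc r s) := by
  intro w ⟨hrw, hws⟩ v ⟨hrv, hvs⟩ hwv
  apply sinr_le_sinr_of_cross_nonneg hb hσ hc hM hsum hprod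
  have h₁ : (w - r) * (v - s) ≤ 0 := mul_nonpos_of_nonneg_of_nonpos (by linarith) (by linarith)
  have h₂ : (w - s) * (v - r) ≤ 0 := mul_nonpos_of_nonpos_of_nonneg (by linarith) (by linarith)
  exact mul_nonneg_of_nonpos_of_nonpos (by linarith) (by linarith)

lemma sinr_le_sinr_min (hb : 0 < b) (hσ : 0 < σ2) (hc : 0 < c) (hM : 0 < M)
    (hsum : b * c * M * (r + s) = a * M ^ 2 + b * c ^ 2 + σ2) (hprod : b * (r * s) = a)
    (hrs : r ≤ s) {u v : ℝ} (hvu : v ≤ u) (hus : u ≤ s) :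
    sinr a b σ2 c v M ≤ sinr a b σ2 c (min u r) M := by
  rcases le_total u r with hur | hru
  · rw [min_eq_left hur]
    exact monotoneOn_sinr_Iic hb hσ hc hM hsum hprod hrs (hvu.trans hur) hur hvu
  rw [min_eq_right hru]
  rcases le_total v r with hvr | hrv
  · exact monotoneOn_sinr_Iic hb hσ hc hM hsum hprod hrs hvr (le_refl r) hvr
  · exact antitoneOn_sinr_Icc hb hσ hc hM hsum hprod ⟨le_rfl, hrs⟩ ⟨hrv, hvu.trans hus⟩ hrv

end Sinr

section Roots

variable {a b σ2 c M : ℝ}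

-- The roots of `b c M t² - (a M² + b c² + σ²) t + a c M`; `sinrRootLow` is `ω₂` with
-- `c² = P_T`, `M² = P_max`.
noncomputable def sinrRootLow (a b σ2 c M : ℝ) : ℝ :=
  (M ^ 2 * a + c ^ 2 * b + σ2 -
      √((M ^ 2 * a + c ^ 2 * b + σ2) ^ 2 - 4 * c ^ 2 * M ^ 2 * a * b)) / (2 * (c * M) * b)

noncomputable def sinrRootHigh (a b σ2 c M : ℝ) : ℝ :=
  (M ^ 2 * a + c ^ 2 * b + σ2 +
      √((M ^ 2 * a + c ^ 2 * b + σ2) ^ 2 - 4 * c ^ 2 * M ^ 2 * a * b)) / (2 * (c * M) * b)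

lemma sinr_discr_eq :
    (M ^ 2 * a + c ^ 2 * b + σ2) ^ 2 - 4 * c ^ 2 * M ^ 2 * a * b =
      (M ^ 2 * a - c ^ 2 * b - σ2) ^ 2 + 4 * M ^ 2 * a * σ2 := by
  ring

lemma sinr_discr_nonneg (ha : 0 ≤ a) (hσ : 0 ≤ σ2) :
    0 ≤ (M ^ 2 * a + c ^ 2 * b + σ2) ^ 2 - 4 * c ^ 2 * M ^ 2 * a * b := by
  rw [sinr_discr_eq]
  positivity

lemma sinrRootLow_le_sinrRootHigh (hb : 0 < b) (hc : 0 < c) (hM : 0 < M) :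
    sinrRootLow a b σ2 c M ≤ sinrRootHigh a b σ2 c M := by
  unfold sinrRootLow sinrRootHigh
  gcongr
  linarith [Real.sqrt_nonneg ((M ^ 2 * a + c ^ 2 * b + σ2) ^ 2 - 4 * c ^ 2 * M ^ 2 * a * b)]

lemma sinrRoot_sum (hb : b ≠ 0) (hc : c ≠ 0) (hM : M ≠ 0) :
    b * c * M * (sinrRootLow a b σ2 c M + sinrRootHigh a b σ2 c M) =
      a * M ^ 2 + b * c ^ 2 + σ2 := by
  unfold sinrRootLow sinrRootHigh
  field_simp
  ring

lemma sinrRoot_prod (ha : 0 ≤ a) (hσ : 0 ≤ σ2) (hb : b ≠ 0) (hc : c ≠ 0) (hM : M ≠ 0) :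
    b * (sinrRootLow a b σ2 c M * sinrRootHigh a b σ2 c M) = a := by
  have hq := Real.sq_sqrt (sinr_discr_nonneg (b := b) (c := c) (M := M) ha hσ)
  unfold sinrRootLow sinrRootHigh
  generalize √((M ^ 2 * a + c ^ 2 * b + σ2) ^ 2 - 4 * c ^ 2 * M ^ 2 * a * b) = q at hq ⊢
  field_simp
  linear_combination -hq

lemma sinrRootLow_le (ha : 0 ≤ a) (hb : 0 < b) (hσ : 0 ≤ σ2) (hc : 0 < c) (hM : 0 < M) :
    sinrRootLow a b σ2 c M ≤ (c ^ 2 * b + σ2) / (c * M * b) := by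
  have hq : M ^ 2 * a - c ^ 2 * b - σ2 ≤
      √((M ^ 2 * a + c ^ 2 * b + σ2) ^ 2 - 4 * c ^ 2 * M ^ 2 * a * b) := by
    rw [sinr_discr_eq]
    exact (le_abs_self _).trans (Real.abs_le_sqrt (le_add_of_nonneg_right (by positivity)))
  rw [sinrRootLow, div_le_div_iff₀ (by positivity) (by positivity)]
  nlinarith [mul_pos (mul_pos hc hM) hb]

lemma sqrt_div_le_sinrRootHigh (ha : 0 ≤ a) (hb : 0 < b) (hσ : 0 ≤ σ2) (hc : 0 < c)
    (hM : 0 < M) : √(a / b) ≤ sinrRootHigh a b σ2 c M := by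
  have hhigh : 0 ≤ sinrRootHigh a b σ2 c M := by unfold sinrRootHigh; positivity
  have hle := sinrRootLow_le_sinrRootHigh (a := a) (σ2 := σ2) hb hc hM
  rw [Real.sqrt_le_left hhigh, div_le_iff₀ hb]
  calc a = b * (sinrRootLow a b σ2 c M * sinrRootHigh a b σ2 c M) :=
        (sinrRoot_prod ha hσ hb.ne' hc.ne' hM.ne').symm
    _ ≤ b * (sinrRootHigh a b σ2 c M * sinrRootHigh a b σ2 c M) := by gcongr
    _ = sinrRootHigh a b σ2 c M ^ 2 * b := by ring

end Roots

/-- The SINR `h(ω, x) = (a − bω²)x²/(b(c − ωx)² + σ²)` is jointly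
maximized over `0 < ω ≤ min{1, √(a/b)}` and `0 < x ≤ M = √(P_max)` by
transmitting at full source power `x = M` with parameter
`ω* = min{1, √(a/b), ω₁, ω₂}`. -/
theorem stmt7 (a b σ2 PT Pmax : ℝ) (ha : 0 < a) (hb : 0 < b) (hσ : 0 < σ2)
    (hPT : 0 < PT) (hPmax : 0 < Pmax) :
    let c : ℝ := Real.sqrt PT
    let M : ℝ := Real.sqrt Pmax
    let h : ℝ → ℝ → ℝ := fun ω x =>
      (a - b * ω ^ 2) * x ^ 2 / (b * (c - ω * x) ^ 2 + σ2)
    let ω₁ : ℝ := (PT * b + σ2) / (Real.sqrt (PT * Pmax) * b)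
    let ω₂ : ℝ :=
      ((Pmax * a + PT * b + σ2) -
          Real.sqrt ((Pmax * a + PT * b + σ2) ^ 2 - 4 * PT * Pmax * a * b)) /
        (2 * Real.sqrt (PT * Pmax) * b)
    let ωs : ℝ := min 1 (min (Real.sqrt (a / b)) (min ω₁ ω₂))
    ∀ ω x : ℝ, 0 < ω → ω ≤ min 1 (Real.sqrt (a / b)) → 0 < x → x ≤ M →
      h ω x ≤ h ωs M := by
  intro c M h ω₁ ω₂ ωs ω x hω hωm hx hxM
  have hc : 0 < c := Real.sqrt_pos.2 hPT
  have hM : 0 < M := Real.sqrt_pos.2 hPmax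
  have hc2 : c ^ 2 = PT := Real.sq_sqrt hPT.le
  have hM2 : M ^ 2 = Pmax := Real.sq_sqrt hPmax.le
  have hcM : √(PT * Pmax) = c * M := Real.sqrt_mul hPT.le Pmax
  have hω₁ : ω₁ = (c ^ 2 * b + σ2) / (c * M * b) := by simp only [ω₁, hcM, hc2]
  have hω₂ : ω₂ = sinrRootLow a b σ2 c M := by simp only [ω₂, sinrRootLow, hcM, hc2, hM2]
  have hωs : ωs = min (min 1 √(a / b)) (sinrRootLow a b σ2 c M) := by
    simp only [ωs, hω₁, hω₂, min_eq_right (sinrRootLow_le ha.le hb hσ.le hc hM), min_assoc]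
  have hrescale : ω * x / M ≤ ω := div_le_of_le_mul₀ hM.le hω.le (by gcongr)
  calc h ω x ≤ sinr a b σ2 c (ω * x / M) M :=
        sinr_le_sinr_full_power ha.le hb.le hσ.le hM hx.le hxM
    _ ≤ sinr a b σ2 c (min (min 1 √(a / b)) (sinrRootLow a b σ2 c M)) M :=
        sinr_le_sinr_min hb hσ hc hM (sinrRoot_sum hb.ne' hc.ne' hM.ne')
          (sinrRoot_prod ha.le hσ.le hb.ne' hc.ne' hM.ne')
          (sinrRootLow_le_sinrRootHigh hb hc hM) (hrescale.trans hωm)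
          ((min_le_right _ _).trans (sqrt_div_le_sinrRootHigh ha.le hb hσ.le hc hM))
    _ = h ωs M := by rw [hωs]; rfl
end

section
/- Let a, b, c, σ² > 0 be real numbers and fix ω with 0 < ω and a − bω² > 0. Define h(ω, x) = (a − bω²) x² / (b(c − ωx)² + σ²) and x* = (bc² + σ²)/(bcω). Then for every x > 0 one has h(ω, x) ≤ h(ω, x*); that is, for fixed interference parameter ω the source amplitude x* maximizes the SINR over all positive amplitudes. -/
/-!
The SINR is `(a - bω²) · x² / D(x)` with `D(x) = b(c - ωx)² + σ²`. With `u = ωx` one has the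
identity `D(x) (bc² + σ²) - bσ² u² = (bc² + σ² - bcu)²`, so `x² / D(x) ≤ (bc² + σ²) / (bσ²ω²)`
for every `x`, with equality exactly at `x* = (bc² + σ²)/(bcω)`.
-/

namespace RelaySINR

noncomputable def sinr (a b c σ2 ω x : ℝ) : ℝ :=
  (a - b * ω ^ 2) * x ^ 2 / (b * (c - ω * x) ^ 2 + σ2)

noncomputable def optimalAmplitude (b c σ2 ω : ℝ) : ℝ :=
  (b * c ^ 2 + σ2) / (b * c * ω)

theorem denom_mul_sub_eq_sq (b c σ2 u : ℝ) :
    (b * (c - u) ^ 2 + σ2) * (b * c ^ 2 + σ2) - b * σ2 * u ^ 2 = (b * c ^ 2 + σ2 - b * c * u) ^ 2 := by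
  ring

theorem sq_div_denom_le {b σ2 ω : ℝ} (hb : 0 < b) (hσ : 0 < σ2) (hω : ω ≠ 0) (c x : ℝ) :
    x ^ 2 / (b * (c - ω * x) ^ 2 + σ2) ≤ (b * c ^ 2 + σ2) / (b * σ2 * ω ^ 2) := by
  rw [div_le_div_iff₀ (by positivity) (by positivity)]
  nlinarith [denom_mul_sub_eq_sq b c σ2 (ω * x), sq_nonneg (b * c ^ 2 + σ2 - b * c * (ω * x))]

theorem sinr_le {a b σ2 ω : ℝ} (hfeas : 0 ≤ a - b * ω ^ 2) (hb : 0 < b) (hσ : 0 < σ2)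
    (hω : ω ≠ 0) (c x : ℝ) :
    sinr a b c σ2 ω x ≤ (a - b * ω ^ 2) * (b * c ^ 2 + σ2) / (b * σ2 * ω ^ 2) := by
  rw [sinr, mul_div_assoc, mul_div_assoc]
  exact mul_le_mul_of_nonneg_left (sq_div_denom_le hb hσ hω c x) hfeas

theorem sinr_optimalAmplitude (a : ℝ) {b c σ2 ω : ℝ} (hb : 0 < b) (hc : c ≠ 0) (hσ : 0 < σ2)
    (hω : ω ≠ 0) :
    sinr a b c σ2 ω (optimalAmplitude b c σ2 ω) =
      (a - b * ω ^ 2) * (b * c ^ 2 + σ2) / (b * σ2 * ω ^ 2) := by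
  have hgap : c - ω * optimalAmplitude b c σ2 ω = -σ2 / (b * c) := by
    rw [optimalAmplitude]
    field_simp [hb.ne']
    ring
  rw [sinr, hgap, optimalAmplitude]
  field_simp [hb.ne', hσ.ne']
  ring

end RelaySINR

theorem stmt8_general (a b c σ2 : ℝ) (hb : 0 < b) (hc : 0 < c)
    (hσ : 0 < σ2) (ω : ℝ) (hω : 0 < ω) (hfeas : 0 < a - b * ω ^ 2) :
    let h : ℝ → ℝ := fun x =>
      (a - b * ω ^ 2) * x ^ 2 / (b * (c - ω * x) ^ 2 + σ2)
    let xs : ℝ := (b * c ^ 2 + σ2) / (b * c * ω)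
    ∀ x : ℝ, 0 < x → h x ≤ h xs := fun x _ =>
  (RelaySINR.sinr_le hfeas.le hb hσ hω.ne' c x).trans_eq
    (RelaySINR.sinr_optimalAmplitude a hb hc.ne' hσ hω.ne').symm

/-- For fixed interference parameter `ω`, the source amplitude
`x* = (bc² + σ²)/(bcω)` maximizes the SINR
`h(ω, x) = (a − bω²)x²/(b(c − ωx)² + σ²)` over all positive amplitudes `x`. -/
theorem stmt8 (a b c σ2 : ℝ) (ha : 0 < a) (hb : 0 < b) (hc : 0 < c)
    (hσ : 0 < σ2) (ω : ℝ) (hω : 0 < ω) (hfeas : 0 < a - b * ω ^ 2) :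
    let h : ℝ → ℝ := fun x =>
      (a - b * ω ^ 2) * x ^ 2 / (b * (c - ω * x) ^ 2 + σ2)
    let xs : ℝ := (b * c ^ 2 + σ2) / (b * c * ω)
    ∀ x : ℝ, 0 < x → h x ≤ h xs :=
  stmt8_general a b c σ2 hb hc hσ ω hω hfeas
end

section
/- Let a, b, c, σ² > 0 be real numbers and fix x > 0. Define h(ω, x) = (a − bω²) x² / (b(c − ωx)² + σ²) and ω*(x) = [ (a x² + b c² + σ²) − √((a x² + b c² + σ²)² − 4 a b c² x²) ] / (2 b c x). Then the discriminant (a x² + b c² + σ²)² − 4 a b c² x² is positive, and for every ω with 0 < ω ≤ min{1, √(a/b)} one has h(ω, x) ≤ h(ω*(x), x); that is, for fixed source amplitude x the parameter ω*(x) maximizes the SINR over the feasible interval. -/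
/-!
Write `S = a x² + b c² + σ²` and `D(ω) = b (c − ω x)² + σ²`. The value `ω*` is the smaller root
of `b c x ω² − S ω + a c x = 0`, the stationarity equation of `h`. For any root `w` of it one has
the identity `(a − b w²) D(ω) − (a − b ω²) D(w) = b (S − 2 b c x w) (ω − w)²`, and for the smaller
root `S − 2 b c x ω* = √Δ ≥ 0`. Hence `h ω ≤ h ω*` for every real `ω`, not only feasible ones.
-/

section SINR

variable {a b c σ2 x : ℝ}

theorem sinr_discr_pos (ha : 0 ≤ a) (hb : 0 ≤ b) (hσ : 0 < σ2) :
    0 < (a * x ^ 2 + b * c ^ 2 + σ2) ^ 2 - 4 * a * b * c ^ 2 * x ^ 2 := by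
  have hpos : 0 < σ2 * (2 * a * x ^ 2 + 2 * b * c ^ 2 + σ2) := by positivity
  nlinarith [sq_nonneg (a * x ^ 2 - b * c ^ 2)]

theorem sinr_cross_sub_eq_of_isRoot {w : ℝ}
    (hw : b * c * x * w ^ 2 - (a * x ^ 2 + b * c ^ 2 + σ2) * w + a * c * x = 0) (ω : ℝ) :
    (a - b * w ^ 2) * (b * (c - ω * x) ^ 2 + σ2) - (a - b * ω ^ 2) * (b * (c - w * x) ^ 2 + σ2) =
      b * (a * x ^ 2 + b * c ^ 2 + σ2 - 2 * b * c * x * w) * (ω - w) ^ 2 := by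
  linear_combination (2 * b * (w - ω)) * hw

theorem sinr_le_of_isRoot (hb : 0 ≤ b) (hσ : 0 < σ2) {w : ℝ}
    (hw : b * c * x * w ^ 2 - (a * x ^ 2 + b * c ^ 2 + σ2) * w + a * c * x = 0)
    (hw_le : 2 * b * c * x * w ≤ a * x ^ 2 + b * c ^ 2 + σ2) (ω : ℝ) :
    (a - b * ω ^ 2) * x ^ 2 / (b * (c - ω * x) ^ 2 + σ2) ≤
      (a - b * w ^ 2) * x ^ 2 / (b * (c - w * x) ^ 2 + σ2) := by
  rw [div_le_div_iff₀ (by positivity) (by positivity), ← sub_nonneg]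
  have hgap : 0 ≤ a * x ^ 2 + b * c ^ 2 + σ2 - 2 * b * c * x * w := sub_nonneg.mpr hw_le
  calc 0 ≤ x ^ 2 * (b * (a * x ^ 2 + b * c ^ 2 + σ2 - 2 * b * c * x * w) * (ω - w) ^ 2) := by
        positivity
    _ = _ := by linear_combination (-x ^ 2) * sinr_cross_sub_eq_of_isRoot hw ω

theorem sinr_smaller_root (hb : 0 < b) (hc : 0 < c) (hx : 0 < x)
    (hΔ : 0 ≤ (a * x ^ 2 + b * c ^ 2 + σ2) ^ 2 - 4 * a * b * c ^ 2 * x ^ 2) :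
    let w := ((a * x ^ 2 + b * c ^ 2 + σ2) -
      √((a * x ^ 2 + b * c ^ 2 + σ2) ^ 2 - 4 * a * b * c ^ 2 * x ^ 2)) / (2 * b * c * x)
    b * c * x * w ^ 2 - (a * x ^ 2 + b * c ^ 2 + σ2) * w + a * c * x = 0 ∧
      2 * b * c * x * w ≤ a * x ^ 2 + b * c ^ 2 + σ2 := by
  intro w
  have hw : 2 * b * c * x * w = (a * x ^ 2 + b * c ^ 2 + σ2) -
      √((a * x ^ 2 + b * c ^ 2 + σ2) ^ 2 - 4 * a * b * c ^ 2 * x ^ 2) :=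
    mul_div_cancel₀ _ (by positivity)
  refine ⟨?_, hw ▸ sub_le_self _ (Real.sqrt_nonneg _)⟩
  have h4 : 4 * (b * c * x) *
      (b * c * x * w ^ 2 - (a * x ^ 2 + b * c ^ 2 + σ2) * w + a * c * x) = 0 := by
    linear_combination (2 * b * c * x * w - (a * x ^ 2 + b * c ^ 2 + σ2) -
      √((a * x ^ 2 + b * c ^ 2 + σ2) ^ 2 - 4 * a * b * c ^ 2 * x ^ 2)) * hw + Real.sq_sqrt hΔ
  exact (mul_eq_zero.mp h4).resolve_left (by positivity)

end SINR

/-- For fixed source amplitude `x > 0`, the discriminant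
`(ax² + bc² + σ²)² − 4abc²x²` is positive, and the parameter
`ω*(x) = ((ax² + bc² + σ²) − √((ax² + bc² + σ²)² − 4abc²x²))/(2bcx)` maximizes
the SINR `h(ω, x) = (a − bω²)x²/(b(c − ωx)² + σ²)` over `0 < ω ≤ min{1, √(a/b)}`. -/
theorem stmt10 (a b c σ2 : ℝ) (ha : 0 < a) (hb : 0 < b) (hc : 0 < c)
    (hσ : 0 < σ2) (x : ℝ) (hx : 0 < x) :
    let h : ℝ → ℝ := fun ω =>
      (a - b * ω ^ 2) * x ^ 2 / (b * (c - ω * x) ^ 2 + σ2)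
    let ωs : ℝ :=
      ((a * x ^ 2 + b * c ^ 2 + σ2) -
          Real.sqrt ((a * x ^ 2 + b * c ^ 2 + σ2) ^ 2 - 4 * a * b * c ^ 2 * x ^ 2)) /
        (2 * b * c * x)
    0 < (a * x ^ 2 + b * c ^ 2 + σ2) ^ 2 - 4 * a * b * c ^ 2 * x ^ 2 ∧
      ∀ ω : ℝ, 0 < ω → ω ≤ min 1 (Real.sqrt (a / b)) → h ω ≤ h ωs := by
  intro h ωs
  have hΔ := sinr_discr_pos (x := x) (c := c) ha.le hb.le hσ
  obtain ⟨hroot, hle⟩ := sinr_smaller_root hb hc hx hΔ.le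
  exact ⟨hΔ, fun ω _ _ => sinr_le_of_isRoot hb.le hσ hroot hle ω⟩
end

section
/- Fix a positive integer ν, a nonzero vector h ∈ ℂ^ν, a real number ω, and a complex number g, and suppose ω²|g|² ≤ ‖h‖². Among all pairs (m₁, m₂) of vectors in ℂ^ν satisfying ⟨h, m₂⟩ = −ω g and ‖m₁‖² + ‖m₂‖² ≤ 1, the maximum possible value of |⟨h, m₁⟩| is β = √(‖h‖² − ω²|g|²), attained by m₁ = (β/‖h‖²)·h together with m₂ = −(ω g/‖h‖²)·h; i.e. for every feasible pair (m₁, m₂), |⟨h, m₁⟩|² ≤ ‖h‖² − ω²|g|². -/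
/-!
Cauchy–Schwarz applied to `m₁` and to `m₂` gives
`|⟨h, m₁⟩|² + ω²|g|² ≤ ‖h‖² (‖m₁‖² + ‖m₂‖²) ≤ ‖h‖²`; the stated multiples of `h` turn both
Cauchy–Schwarz steps and the power constraint into equalities.
-/

open scoped InnerProductSpace

section

variable {𝕜 E : Type*} [RCLike 𝕜] [NormedAddCommGroup E] [InnerProductSpace 𝕜 E]

theorem norm_inner_sq_add_norm_inner_sq_le (h m₁ m₂ : E) :
    ‖⟪h, m₁⟫_𝕜‖ ^ 2 + ‖⟪h, m₂⟫_𝕜‖ ^ 2 ≤ ‖h‖ ^ 2 * (‖m₁‖ ^ 2 + ‖m₂‖ ^ 2) := by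
  have cs (m : E) : ‖⟪h, m⟫_𝕜‖ ^ 2 ≤ ‖h‖ ^ 2 * ‖m‖ ^ 2 := by
    rw [← mul_pow]
    exact pow_le_pow_left₀ (norm_nonneg _) (norm_inner_le_norm h m) 2
  linarith [cs m₁, cs m₂]

theorem inner_smul_div_norm_sq_self {h : E} (hh : h ≠ 0) (c : 𝕜) :
    ⟪h, (c / ((‖h‖ ^ 2 : ℝ) : 𝕜)) • h⟫_𝕜 = c := by
  have : ((‖h‖ ^ 2 : ℝ) : 𝕜) ≠ 0 := by exact_mod_cast pow_ne_zero 2 (norm_ne_zero_iff.2 hh)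
  rw [inner_smul_right, inner_self_eq_norm_sq_to_K, ← RCLike.ofReal_pow, div_mul_cancel₀ c this]

theorem norm_smul_div_norm_sq_self (h : E) (c : 𝕜) :
    ‖(c / ((‖h‖ ^ 2 : ℝ) : 𝕜)) • h‖ = ‖c‖ / ‖h‖ := by
  rcases eq_or_ne h 0 with rfl | hh
  · simp
  rw [norm_smul, norm_div, RCLike.norm_ofReal, abs_of_nonneg (by positivity)]
  field_simp [norm_ne_zero_iff.2 hh]

end

theorem stmt13_general (ν : ℕ) (h : EuclideanSpace ℂ (Fin ν)) (hh : h ≠ 0)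
    (ω : ℝ) (g : ℂ) (hfeas : ω ^ 2 * ‖g‖ ^ 2 ≤ ‖h‖ ^ 2) :
    let β : ℝ := Real.sqrt (‖h‖ ^ 2 - ω ^ 2 * ‖g‖ ^ 2)
    let m₁s : EuclideanSpace ℂ (Fin ν) := ((β / ‖h‖ ^ 2 : ℝ) : ℂ) • h
    let m₂s : EuclideanSpace ℂ (Fin ν) := (-((ω : ℂ) * g) / ((‖h‖ ^ 2 : ℝ) : ℂ)) • h
    (inner ℂ h m₂s : ℂ) = -((ω : ℂ) * g) ∧
      ‖m₁s‖ ^ 2 + ‖m₂s‖ ^ 2 ≤ 1 ∧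
      ‖(inner ℂ h m₁s : ℂ)‖ = β ∧
      ∀ m₁ m₂ : EuclideanSpace ℂ (Fin ν),
        (inner ℂ h m₂ : ℂ) = -((ω : ℂ) * g) → ‖m₁‖ ^ 2 + ‖m₂‖ ^ 2 ≤ 1 →
          ‖(inner ℂ h m₁ : ℂ)‖ ^ 2 ≤ ‖h‖ ^ 2 - ω ^ 2 * ‖g‖ ^ 2 := by
  intro β m₁s m₂s
  have hβ : 0 ≤ β := Real.sqrt_nonneg _
  have hβ_sq : β ^ 2 = ‖h‖ ^ 2 - ω ^ 2 * ‖g‖ ^ 2 := Real.sq_sqrt (sub_nonneg.2 hfeas)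
  have hm₁s : m₁s = ((β : ℂ) / ((‖h‖ ^ 2 : ℝ) : ℂ)) • h := by
    rw [← Complex.ofReal_div]
  have hωg : ‖-((ω : ℂ) * g)‖ ^ 2 = ω ^ 2 * ‖g‖ ^ 2 := by
    rw [norm_neg, norm_mul, Complex.norm_real, Real.norm_eq_abs, mul_pow, sq_abs]
  have hnorm (c : ℂ) : ‖(c / ((‖h‖ ^ 2 : ℝ) : ℂ)) • h‖ = ‖c‖ / ‖h‖ :=
    norm_smul_div_norm_sq_self h c
  refine ⟨inner_smul_div_norm_sq_self hh _, ?_, ?_, fun m₁ m₂ hm₂ hpow => ?_⟩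
  · rw [hm₁s, hnorm, hnorm, div_pow, div_pow, hωg, Complex.norm_real, Real.norm_eq_abs, sq_abs,
      hβ_sq, ← add_div]
    exact div_le_one_of_le₀ (by linarith) (by positivity)
  · have hinner : ⟪h, m₁s⟫_ℂ = β := by
      rw [hm₁s]
      exact inner_smul_div_norm_sq_self hh _
    rw [hinner, Complex.norm_real, Real.norm_eq_abs, abs_of_nonneg hβ]
  · have hcs := norm_inner_sq_add_norm_inner_sq_le (𝕜 := ℂ) h m₁ m₂
    rw [hm₂, hωg] at hcs
    linarith [mul_le_of_le_one_right (sq_nonneg ‖h‖) hpow]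

/-- Subject to the linear interference constraint
`⟨h, m₂⟩ = −ω g` and the total-power constraint `‖m₁‖² + ‖m₂‖² ≤ 1`, the
maximum of `|⟨h, m₁⟩|` is `β = √(‖h‖² − ω²|g|²)`, attained by
`m₁ = (β/‖h‖²)·h` and `m₂ = −(ωg/‖h‖²)·h`. -/
theorem stmt13 (ν : ℕ) (hν : 0 < ν) (h : EuclideanSpace ℂ (Fin ν)) (hh : h ≠ 0)
    (ω : ℝ) (g : ℂ) (hfeas : ω ^ 2 * ‖g‖ ^ 2 ≤ ‖h‖ ^ 2) :
    let β : ℝ := Real.sqrt (‖h‖ ^ 2 - ω ^ 2 * ‖g‖ ^ 2)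
    let m₁s : EuclideanSpace ℂ (Fin ν) := ((β / ‖h‖ ^ 2 : ℝ) : ℂ) • h
    let m₂s : EuclideanSpace ℂ (Fin ν) := (-((ω : ℂ) * g) / ((‖h‖ ^ 2 : ℝ) : ℂ)) • h
    (inner ℂ h m₂s : ℂ) = -((ω : ℂ) * g) ∧
      ‖m₁s‖ ^ 2 + ‖m₂s‖ ^ 2 ≤ 1 ∧
      ‖(inner ℂ h m₁s : ℂ)‖ = β ∧
      ∀ m₁ m₂ : EuclideanSpace ℂ (Fin ν),
        (inner ℂ h m₂ : ℂ) = -((ω : ℂ) * g) → ‖m₁‖ ^ 2 + ‖m₂‖ ^ 2 ≤ 1 →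
          ‖(inner ℂ h m₁ : ℂ)‖ ^ 2 ≤ ‖h‖ ^ 2 - ω ^ 2 * ‖g‖ ^ 2 :=
  stmt13_general ν h hh ω g hfeas
end
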